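/- Fix η ∈ ℝ, a real r×n matrix A⁰ with orthonormal rows, i.e. A⁰·(A⁰)ᵀ = I_r, a real m×r matrix B⁰, and real m×n matrices G(0), G(1), G(2), … . Define A(0) = A⁰, B(0) = B⁰, and the SGD recursions A(s+1) = A(s) − η·B(s)ᵀ·G(s) and B(s+1) = B(s) − η·G(s)·A(s)ᵀ. Define simultaneously f_A : ℕ → ℝ^{n×n} and f_B : ℕ → ℝ^{m×n} by f_A(0) = 0, f_B(0) = 0, f_A(s+1) = f_A(s) − η·f_B(s)ᵀ·G(s) − (A⁰)ᵀ·(B⁰)ᵀ·G(s), and f_B(s+1) = f_B(s) − G(s)·(η·f_A(s)ᵀ + I_n). Then for every s ∈ ℕ: A(s) = A⁰ + η·A⁰·f_A(s) and B(s) = B⁰ + η·f_B(s)·(A⁰)ᵀ. -/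

import Mathlib

/-!
Induction on `s`. Substituting the closed forms into one SGD step, the `B` update is an identity
of polynomial expressions, while the `A` update produces the stray term `η • B⁰ᵀ * G`; orthonormality
`A⁰ * A⁰ᵀ = 1` rewrites it as `η • A⁰ * (A⁰ᵀ * B⁰ᵀ * G)`, which is the source of the last summand
in the recursion for `f_A`.
-/

open Matrix

section

variable {R : Type*} [CommRing R] {m r n : Type*}

theorem lora_sgd_step_A_closedForm [Fintype m] [Fintype r] [Fintype n] [DecidableEq r] (η : R)
    (A0 : Matrix r n R) (hA0 : A0 * A0ᵀ = 1) (B0 : Matrix m r R) (G : Matrix m n R) (FA : Matrix n n R)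
    (FB : Matrix m n R) :
    A0 + η • (A0 * FA) - η • ((B0 + η • (FB * A0ᵀ))ᵀ * G) =
      A0 + η • (A0 * (FA - η • (FBᵀ * G) - A0ᵀ * B0ᵀ * G)) := by
  simp only [transpose_add, transpose_smul, transpose_mul, transpose_transpose, Matrix.add_mul,
    Matrix.smul_mul, Matrix.mul_sub, Matrix.mul_smul, Matrix.mul_assoc]
  rw [← Matrix.mul_assoc A0 A0ᵀ, hA0, Matrix.one_mul]
  module

theorem lora_sgd_step_B_closedForm [Fintype n] [DecidableEq n] (η : R) (A0 : Matrix r n R)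
    (B0 : Matrix m r R) (G : Matrix m n R) (FA : Matrix n n R) (FB : Matrix m n R) :
    B0 + η • (FB * A0ᵀ) - η • (G * (A0 + η • (A0 * FA))ᵀ) =
      B0 + η • ((FB - G * (η • FAᵀ + 1)) * A0ᵀ) := by
  simp only [transpose_add, transpose_smul, transpose_mul, Matrix.mul_add, Matrix.mul_smul,
    Matrix.sub_mul, Matrix.add_mul, Matrix.smul_mul, Matrix.one_mul, Matrix.mul_assoc]
  module

end

/-- Closed-form LoRA SGD dynamics for task `i` under SLAO's initialization:
`A⁰` has orthonormal rows (`A⁰·(A⁰)ᵀ = I_r`) and `B⁰` is arbitrary; then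
`A(s) = A⁰ + η·A⁰·f_A(s)` and `B(s) = B⁰ + η·f_B(s)·(A⁰)ᵀ`. -/
theorem slao_task_dynamics {m r n : ℕ} (η : ℝ)
    (A0 : Matrix (Fin r) (Fin n) ℝ)
    (hA0orth : A0 * A0ᵀ = 1)
    (B0 : Matrix (Fin m) (Fin r) ℝ)
    (G : ℕ → Matrix (Fin m) (Fin n) ℝ)
    (A : ℕ → Matrix (Fin r) (Fin n) ℝ)
    (B : ℕ → Matrix (Fin m) (Fin r) ℝ)
    (fA : ℕ → Matrix (Fin n) (Fin n) ℝ)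
    (fB : ℕ → Matrix (Fin m) (Fin n) ℝ)
    (hA0 : A 0 = A0) (hB0 : B 0 = B0)
    (hA : ∀ s, A (s + 1) = A s - η • ((B s)ᵀ * G s))
    (hB : ∀ s, B (s + 1) = B s - η • (G s * (A s)ᵀ))
    (hfA0 : fA 0 = 0) (hfB0 : fB 0 = 0)
    (hfA : ∀ s, fA (s + 1) = fA s - η • ((fB s)ᵀ * G s) - A0ᵀ * B0ᵀ * G s)
    (hfB : ∀ s, fB (s + 1) = fB s - G s * (η • (fA s)ᵀ + 1)) :
    ∀ s : ℕ,
      A s = A0 + η • (A0 * fA s) ∧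
      B s = B0 + η • (fB s * A0ᵀ) := by
  intro s
  induction s with
  | zero => simp [hA0, hB0, hfA0, hfB0]
  | succ s ih =>
    obtain ⟨ihA, ihB⟩ := ih
    constructor
    · rw [hA, hfA, ihA, ihB, lora_sgd_step_A_closedForm η A0 hA0orth]
    · rw [hB, hfB, ihA, ihB, lora_sgd_step_B_closedForm η A0]
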